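/- arXiv:1609.04464 — 3 statements merged into one kernel-verified Lean document; each statement's English description precedes it below -/
import Mathlib

section
/- Fix a block with n individuals, potential treatments D_j(z) ∈ {0,1} satisfying personalized encouragement (treatment depends only on own encouragement) and monotonicity D_j(1) ≥ D_j(0), and local average potential outcomes Ȳ_j(d) for d ∈ {0,1} (averages over peers' natural treatments under a fixed measure φ). Define DITT_block = (1/n)·Σ_j [D_j(1)·Ȳ_j(1) + (1−D_j(1))·Ȳ_j(0)] − (1/n)·Σ_j [D_j(0)·Ȳ_j(1) + (1−D_j(0))·Ȳ_j(0)], and ET_block = (1/n)·Σ_j (D_j(1) − D_j(0)). If ET_block ≠ 0, then DITT_block / ET_block equals the average of Ȳ_j(1) − Ȳ_j(0) over the compliers {j : D_j(1)=1, D_j(0)=0}, i.e., the complier local direct treatment effect LDT_block(1,0,φ,Co). -/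
open Finset

/-- block-level Theorem 1 (Wald ratio identification): DITT/ET equals the
complier local direct treatment effect. `Y1 j` = Ȳ_j(1,φ), `Y0 j` = Ȳ_j(0,φ). -/
theorem stmt_2 (n : ℕ) (hn : 0 < n) (D1 D0 Y1 Y0 : Fin n → ℝ)
    (hD1 : ∀ j, D1 j = 0 ∨ D1 j = 1) (hD0 : ∀ j, D0 j = 0 ∨ D0 j = 1)
    (hmono : ∀ j, D0 j ≤ D1 j)
    (DITT ET : ℝ)
    (hDITT : DITT = (1 / (n : ℝ)) * ∑ j, (D1 j * Y1 j + (1 - D1 j) * Y0 j)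
                  - (1 / (n : ℝ)) * ∑ j, (D0 j * Y1 j + (1 - D0 j) * Y0 j))
    (hET : ET = (1 / (n : ℝ)) * ∑ j, (D1 j - D0 j))
    (hETne : ET ≠ 0) :
    DITT / ET =
      (1 / ((univ.filter (fun j => D1 j = 1 ∧ D0 j = 0)).card : ℝ)) *
        ∑ j ∈ univ.filter (fun j => D1 j = 1 ∧ D0 j = 0), (Y1 j - Y0 j) := by
  set C : Finset (Fin n) := univ.filter (fun j => D1 j = 1 ∧ D0 j = 0) with hC
  have key : ∀ j, D1 j - D0 j = if D1 j = 1 ∧ D0 j = 0 then 1 else 0 := by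
    intro j
    rcases hD1 j with h1 | h1 <;> rcases hD0 j with h0 | h0 <;>
      have := hmono j <;> simp [h1, h0] at * <;> linarith
  have hETsum : ∑ j, (D1 j - D0 j) = (C.card : ℝ) := by
    rw [Finset.sum_congr rfl (fun j _ => key j), ← Finset.sum_filter]
    simp [hC]
  have hDITTsum : DITT = (1 / (n : ℝ)) * ∑ j ∈ C, (Y1 j - Y0 j) := by
    rw [hDITT, ← mul_sub, ← Finset.sum_sub_distrib]
    congr 1
    have : ∀ j, (D1 j * Y1 j + (1 - D1 j) * Y0 j) - (D0 j * Y1 j + (1 - D0 j) * Y0 j)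
        = if D1 j = 1 ∧ D0 j = 0 then Y1 j - Y0 j else 0 := by
      intro j
      have h : (D1 j * Y1 j + (1 - D1 j) * Y0 j) - (D0 j * Y1 j + (1 - D0 j) * Y0 j)
          = (D1 j - D0 j) * (Y1 j - Y0 j) := by ring
      rw [h, key j]
      by_cases hc : D1 j = 1 ∧ D0 j = 0 <;> simp [hc]
    rw [Finset.sum_congr rfl (fun j _ => this j), ← Finset.sum_filter]
  have hETval : ET = (1 / (n : ℝ)) * (C.card : ℝ) := by rw [hET, hETsum]
  have hcard : (C.card : ℝ) ≠ 0 := by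
    intro h; apply hETne; rw [hETval, h, mul_zero]
  have hnne : (n : ℝ) ≠ 0 := Nat.cast_ne_zero.mpr hn.ne'
  rw [hDITTsum, hETval]
  field_simp
end

section
/- With D_j(z) ∈ {0,1} satisfying monotonicity D_j(1) ≥ D_j(0), and for each j and measure m ∈ {φ, ψ} average potential outcomes Ȳ_j(d, m) for d ∈ {0,1}: define for z ∈ {0,1} the intent-to-treat average A(z, m) = (1/n)·Σ_j [D_j(z)·Ȳ_j(1,m) + (1−D_j(z))·Ȳ_j(0,m)]. Then [A(1,φ) − A(1,ψ)] − [A(0,φ) − A(0,ψ)] = (C/n)·[LPT(1) − LPT(0)], where C is the number of compliers and LPT(d) = (1/C)·Σ_{compliers} [Ȳ_j(d,φ) − Ȳ_j(d,ψ)]. Consequently, if C > 0, dividing by ET = (1/n)·Σ_j (D_j(1) − D_j(0)) = C/n identifies the difference of complier local peer treatment effects LPT(1) − LPT(0). -/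
/-!
Under monotonicity with binary take-up, `D₁ j - D₀ j` is the indicator of the compliers
(`D₁ j = 1`, `D₀ j = 0`), and the intent-to-treat contrast of unit `j` is
`(D₁ j - D₀ j) * (Ȳ_j(1) - Ȳ_j(0))`. Averaged over the block, only the compliers contribute.
-/

open Finset

section

variable {R ι : Type*} [Ring R] [Fintype ι]

theorem sum_itt_sub_sum_itt (D₁ D₀ Y₁ Y₀ : ι → R) :
    ∑ j, (D₁ j * Y₁ j + (1 - D₁ j) * Y₀ j) - ∑ j, (D₀ j * Y₁ j + (1 - D₀ j) * Y₀ j) =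
      ∑ j, (D₁ j - D₀ j) * (Y₁ j - Y₀ j) := by
  rw [← sum_sub_distrib]
  exact sum_congr rfl fun j _ => by noncomm_ring

variable [PartialOrder R] [IsOrderedRing R] [Nontrivial R] [DecidableEq R]

theorem sub_eq_ite_of_mem_zero_one {d₁ d₀ : R} (h₁ : d₁ = 0 ∨ d₁ = 1) (h₀ : d₀ = 0 ∨ d₀ = 1)
    (hmono : d₀ ≤ d₁) : d₁ - d₀ = if d₁ = 1 ∧ d₀ = 0 then 1 else 0 := by
  rcases h₁ with rfl | rfl <;> rcases h₀ with rfl | rfl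
  · simp
  · exact absurd (zero_lt_one.trans_le hmono) (lt_irrefl 0)
  · simp
  · simp

theorem sum_sub_mul_eq_sum_compliers {D₁ D₀ : ι → R} (h₁ : ∀ j, D₁ j = 0 ∨ D₁ j = 1)
    (h₀ : ∀ j, D₀ j = 0 ∨ D₀ j = 1) (hmono : ∀ j, D₀ j ≤ D₁ j) (f : ι → R) :
    ∑ j, (D₁ j - D₀ j) * f j = ∑ j ∈ univ.filter (fun j => D₁ j = 1 ∧ D₀ j = 0), f j := by
  simp_rw [sum_filter, sub_eq_ite_of_mem_zero_one (h₁ _) (h₀ _) (hmono _), ite_mul, one_mul,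
    zero_mul]

theorem sum_itt_sub_sum_itt_eq_sum_compliers {D₁ D₀ : ι → R} (h₁ : ∀ j, D₁ j = 0 ∨ D₁ j = 1)
    (h₀ : ∀ j, D₀ j = 0 ∨ D₀ j = 1) (hmono : ∀ j, D₀ j ≤ D₁ j) (Y₁ Y₀ : ι → R) :
    ∑ j, (D₁ j * Y₁ j + (1 - D₁ j) * Y₀ j) - ∑ j, (D₀ j * Y₁ j + (1 - D₀ j) * Y₀ j) =
      ∑ j ∈ univ.filter (fun j => D₁ j = 1 ∧ D₀ j = 0), (Y₁ j - Y₀ j) := by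
  rw [sum_itt_sub_sum_itt, sum_sub_mul_eq_sum_compliers h₁ h₀ hmono]

end

theorem stmt_3_general (n : ℕ) (hn : 0 < n) (D1 D0 Yφ1 Yφ0 Yψ1 Yψ0 : Fin n → ℝ)
    (hD1 : ∀ j, D1 j = 0 ∨ D1 j = 1) (hD0 : ∀ j, D0 j = 0 ∨ D0 j = 1)
    (hmono : ∀ j, D0 j ≤ D1 j)
    (C : ℕ)
    (hCpos : 0 < C)
    (A1φ A1ψ A0φ A0ψ LPT1 LPT0 : ℝ)
    (hA1φ : A1φ = (1 / (n : ℝ)) * ∑ j, (D1 j * Yφ1 j + (1 - D1 j) * Yφ0 j))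
    (hA1ψ : A1ψ = (1 / (n : ℝ)) * ∑ j, (D1 j * Yψ1 j + (1 - D1 j) * Yψ0 j))
    (hA0φ : A0φ = (1 / (n : ℝ)) * ∑ j, (D0 j * Yφ1 j + (1 - D0 j) * Yφ0 j))
    (hA0ψ : A0ψ = (1 / (n : ℝ)) * ∑ j, (D0 j * Yψ1 j + (1 - D0 j) * Yψ0 j))
    (hLPT1 : LPT1 = (1 / (C : ℝ)) *
        ∑ j ∈ univ.filter (fun j => D1 j = 1 ∧ D0 j = 0), (Yφ1 j - Yψ1 j))
    (hLPT0 : LPT0 = (1 / (C : ℝ)) *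
        ∑ j ∈ univ.filter (fun j => D1 j = 1 ∧ D0 j = 0), (Yφ0 j - Yψ0 j)) :
    (A1φ - A1ψ) - (A0φ - A0ψ) = ((C : ℝ) / n) * (LPT1 - LPT0) ∧
    ((A1φ - A1ψ) - (A0φ - A0ψ)) / ((C : ℝ) / n) = LPT1 - LPT0 := by
  have hφ := sum_itt_sub_sum_itt_eq_sum_compliers hD1 hD0 hmono Yφ1 Yφ0
  have hψ := sum_itt_sub_sum_itt_eq_sum_compliers hD1 hD0 hmono Yψ1 Yψ0
  have contrast : (A1φ - A1ψ) - (A0φ - A0ψ) = ((C : ℝ) / n) * (LPT1 - LPT0) := by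
    simp only [sum_sub_distrib] at hφ hψ hLPT1 hLPT0
    rw [hA1φ, hA1ψ, hA0φ, hA0ψ, hLPT1, hLPT0]
    field_simp
    linear_combination hφ - hψ
  exact ⟨contrast, by rw [contrast, mul_div_cancel_left₀ _ (by positivity)]⟩

/-- block-level Theorem 2: the difference of peer ITT contrasts equals
(C/n)·[LPT(1) − LPT(0)], and dividing by ET = C/n identifies LPT(1) − LPT(0).
`Yφ1 j` = Ȳ_j(1,φ), etc. -/
theorem stmt_3 (n : ℕ) (hn : 0 < n) (D1 D0 Yφ1 Yφ0 Yψ1 Yψ0 : Fin n → ℝ)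
    (hD1 : ∀ j, D1 j = 0 ∨ D1 j = 1) (hD0 : ∀ j, D0 j = 0 ∨ D0 j = 1)
    (hmono : ∀ j, D0 j ≤ D1 j)
    (C : ℕ) (hC : C = (univ.filter (fun j => D1 j = 1 ∧ D0 j = 0)).card)
    (hCpos : 0 < C)
    (A1φ A1ψ A0φ A0ψ LPT1 LPT0 : ℝ)
    (hA1φ : A1φ = (1 / (n : ℝ)) * ∑ j, (D1 j * Yφ1 j + (1 - D1 j) * Yφ0 j))
    (hA1ψ : A1ψ = (1 / (n : ℝ)) * ∑ j, (D1 j * Yψ1 j + (1 - D1 j) * Yψ0 j))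
    (hA0φ : A0φ = (1 / (n : ℝ)) * ∑ j, (D0 j * Yφ1 j + (1 - D0 j) * Yφ0 j))
    (hA0ψ : A0ψ = (1 / (n : ℝ)) * ∑ j, (D0 j * Yψ1 j + (1 - D0 j) * Yψ0 j))
    (hLPT1 : LPT1 = (1 / (C : ℝ)) *
        ∑ j ∈ univ.filter (fun j => D1 j = 1 ∧ D0 j = 0), (Yφ1 j - Yψ1 j))
    (hLPT0 : LPT0 = (1 / (C : ℝ)) *
        ∑ j ∈ univ.filter (fun j => D1 j = 1 ∧ D0 j = 0), (Yφ0 j - Yψ0 j)) :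
    (A1φ - A1ψ) - (A0φ - A0ψ) = ((C : ℝ) / n) * (LPT1 - LPT0) ∧
    ((A1φ - A1ψ) - (A0φ - A0ψ)) / ((C : ℝ) / n) = LPT1 - LPT0 :=
  stmt_3_general n hn D1 D0 Yφ1 Yφ0 Yψ1 Yψ0 hD1 hD0 hmono C hCpos A1φ A1ψ A0φ A0ψ LPT1 LPT0 hA1φ
    hA1ψ hA0φ hA0ψ hLPT1 hLPT0
end

section
/- With Z = (Z_1,…,Z_n) i.i.d.-independent Bernoulli(p), p ∈ (0,1), and potential outcomes Y_j(z), the estimator (1/n)·Σ_j [ Y_j(Z)·1{Z_j = 1}/p − Y_j(Z)·1{Z_j = 0}/(1−p) ] is unbiased for the block direct intent-to-treat effect DITT_block(1,0,φ) = (1/n)·Σ_j [Ȳ_j(1,φ) − Ȳ_j(0,φ)], where Ȳ_j(z,φ) = Σ_{z_{(j)}} Y_j(z, z_{(j)})·P(Z_{(j)} = z_{(j)}). -/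
open Finset

/-! Expanding the expectation, the inverse-probability weight `1 / P(Z_j = a)` cancels the
`j`-th factor of the product weight `∏ₖ P(Z_k = z_k)` on the event `z_j = a`, leaving exactly the
weight of `z_{(j)}` that defines `Ȳ_j(a, φ)`. -/

section InverseProbabilityWeighting

variable {ι α K : Type*} [Fintype ι] [DecidableEq ι] [DecidableEq α] [Field K]

theorem ite_div_mul_prod_eq_ite_mul_prod_erase (w : ι → α → K) (z : ι → α) (j : ι) (a : α)
    (ha : w j a ≠ 0) (y : K) :
    (if z j = a then y / w j a else 0) * ∏ k, w k (z k)
      = if z j = a then y * ∏ k ∈ univ.erase j, w k (z k) else 0 := by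
  split_ifs with hz
  · rw [← mul_prod_erase univ _ (mem_univ j), hz]
    field_simp
  · exact zero_mul _

theorem sum_ite_div_mul_prod_eq_sum_ite_mul_prod_erase [Fintype α] (w : ι → α → K) (j : ι)
    (a : α) (ha : w j a ≠ 0) (y : (ι → α) → K) :
    ∑ z, (if z j = a then y z / w j a else 0) * ∏ k, w k (z k)
      = ∑ z, if z j = a then y z * ∏ k ∈ univ.erase j, w k (z k) else 0 :=
  sum_congr rfl fun z _ => ite_div_mul_prod_eq_ite_mul_prod_erase w z j a ha (y z)

end InverseProbabilityWeighting

theorem stmt_10_general (n : ℕ) (p : ℝ) (hp : 0 < p) (hp1 : p < 1)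
    (Y : Fin n → (Fin n → Bool) → ℝ) :
    (∑ z : Fin n → Bool,
        ((1 / (n : ℝ)) * ∑ j,
            (Y j z * (if z j = true then 1 else 0) / p
              - Y j z * (if z j = false then 1 else 0) / (1 - p))) *
          ∏ k, (if z k then p else 1 - p))
    = (1 / (n : ℝ)) * ∑ j,
        ((∑ z : Fin n → Bool,
            if z j = true then Y j z * ∏ k ∈ univ.erase j, (if z k then p else 1 - p) else 0)
          - ∑ z : Fin n → Bool,
            if z j = false then Y j z * ∏ k ∈ univ.erase j, (if z k then p else 1 - p) else 0) := by
  let w : Fin n → Bool → ℝ := fun _ b => if b then p else 1 - p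
  have hw_true (j : Fin n) : w j true ≠ 0 := hp.ne'
  have hw_false (j : Fin n) : w j false ≠ 0 := (sub_pos.mpr hp1).ne'
  simp only [mul_ite, mul_one, mul_zero, ite_div, zero_div]
  simp only [mul_assoc, sum_mul, ← mul_sum]
  rw [sum_comm]
  refine congrArg _ (sum_congr rfl fun j _ => ?_)
  simp only [sub_mul, sum_sub_distrib]
  exact congrArg₂ (· - ·)
    (sum_ite_div_mul_prod_eq_sum_ite_mul_prod_erase w j true (hw_true j) (Y j))
    (sum_ite_div_mul_prod_eq_sum_ite_mul_prod_erase w j false (hw_false j) (Y j))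

/-- the IPW estimator (1/n)·Σ_j [Y_j(Z)·1{Z_j=1}/p − Y_j(Z)·1{Z_j=0}/(1−p)]
is unbiased for the block direct intent-to-treat effect DITT_block(1,0,φ) =
(1/n)·Σ_j [Ȳ_j(1,φ) − Ȳ_j(0,φ)] under the independent Bernoulli(p) mechanism. -/
theorem stmt_10 (n : ℕ) (hn : 0 < n) (p : ℝ) (hp : 0 < p) (hp1 : p < 1)
    (Y : Fin n → (Fin n → Bool) → ℝ) :
    (∑ z : Fin n → Bool,
        ((1 / (n : ℝ)) * ∑ j,
            (Y j z * (if z j = true then 1 else 0) / p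
              - Y j z * (if z j = false then 1 else 0) / (1 - p))) *
          ∏ k, (if z k then p else 1 - p))
    = (1 / (n : ℝ)) * ∑ j,
        ((∑ z : Fin n → Bool,
            if z j = true then Y j z * ∏ k ∈ univ.erase j, (if z k then p else 1 - p) else 0)
          - ∑ z : Fin n → Bool,
            if z j = false then Y j z * ∏ k ∈ univ.erase j, (if z k then p else 1 - p) else 0) :=
  stmt_10_general n p hp hp1 Y
end
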